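/- Let V=(Q,D,Δ,w) be a 1-VASS with disequality tests and let ρ be a valid run such that no internal configuration of ρ (i.e., no configuration other than the first and the last) belongs to Conf_+. Then the underlying path of ρ is primitive. -/

import Mathlib

namespace VASSPaper

/-- A 1-VASS with disequality tests: states `Q`, transition relation `delta`,
integer weights `w`, and for each state a cofinite set `D q ⊆ ℕ` of allowed counter values. -/
structure OneVASS (Q : Type) where
  delta : Q → Q → Prop
  w : Q → Q → ℤ
  D : Q → Set ℕ
  cofinite : ∀ q, (D q)ᶜ.Finite

variable {Q : Type}

/-- A path is a nonempty sequence of states joined by transitions. -/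
def IsPath (V : OneVASS Q) : List Q → Prop
  | [] => False
  | [_] => True
  | a :: b :: l => V.delta a b ∧ IsPath V (b :: l)

/-- The weight of a path: the sum of the weights of its transitions. -/
def pathWeight (V : OneVASS Q) (π : List Q) : ℤ :=
  (List.zipWith V.w π π.tail).sum

/-- The counter value at position `i` of the run over `π` starting with counter `z`. -/
def counterAt (V : OneVASS Q) (z : ℕ) (π : List Q) (i : ℕ) : ℤ :=
  (z : ℤ) + pathWeight V (π.take (i + 1))

/-- `π` lifts to a run from counter value `z`: all counter values stay nonnegative. -/
def IsRun (V : OneVASS Q) (π : List Q) (z : ℕ) : Prop :=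
  IsPath V π ∧ ∀ i, i < π.length → 0 ≤ counterAt V z π i

/-- A valid run additionally respects all disequality guards. -/
def IsValidRun (V : OneVASS Q) (π : List Q) (z : ℕ) : Prop :=
  IsRun V π z ∧ ∀ i, ∀ h : i < π.length, (counterAt V z π i).toNat ∈ V.D (π.get ⟨i, h⟩)

/-- `π` goes from configuration `c` to configuration `c'`. -/
def RunFromTo (V : OneVASS Q) (π : List Q) (c c' : Q × ℕ) : Prop :=
  π.head? = some c.1 ∧ π.getLast? = some c'.1 ∧ (c'.2 : ℤ) = (c.2 : ℤ) + pathWeight V π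

/-- `c'` is reachable from `c` by a valid run. -/
def Reaches (V : OneVASS Q) (c c' : Q × ℕ) : Prop :=
  ∃ π, IsValidRun V π c.2 ∧ RunFromTo V π c c'

/-- A configuration is unbounded if infinitely many configurations are reachable from it. -/
def Unbounded (V : OneVASS Q) (c : Q × ℕ) : Prop :=
  {c' | Reaches V c c'}.Infinite

/-- `(s,0)` covers the state `t`. -/
def Covers (V : OneVASS Q) (s t : Q) : Prop :=
  ∃ z, Reaches V (s, 0) (t, z)

/-- Every state has at most one disequality guard. -/
def SingleGuard (V : OneVASS Q) : Prop :=
  ∀ q, V.D q = Set.univ ∨ ∃ g : ℕ, V.D q = {g}ᶜ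

/-- The minimum weight of a (possibly empty) prefix of `π`. -/
def pmin (V : OneVASS Q) (π : List Q) : ℤ :=
  ((List.range (π.length + 1)).map fun i => pathWeight V (π.take i)).foldr min 0

/-- The maximum weight of a (possibly empty) suffix of `π`. -/
def smax (V : OneVASS Q) (π : List Q) : ℤ :=
  ((List.range (π.length + 1)).map fun i => pathWeight V (π.drop i)).foldr max 0

/-- A cycle on `q`: a path with at least one transition starting and ending at `q`. -/
def IsCycleOn (V : OneVASS Q) (π : List Q) (q : Q) : Prop :=
  IsPath V π ∧ 2 ≤ π.length ∧ π.head? = some q ∧ π.getLast? = some q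

/-- A simple cycle on `q`. -/
def IsSimpleCycleOn (V : OneVASS Q) (π : List Q) (q : Q) : Prop :=
  IsCycleOn V π q ∧ π.dropLast.Nodup

/-- The set of states lying on a positive-weight simple cycle. -/
def Qplus (V : OneVASS Q) : Set Q :=
  {q | ∃ π, IsSimpleCycleOn V π q ∧ 0 < pathWeight V π}

/-- `γ` is a valid choice of cycles: for each `q ∈ Q₊`, `γ q` is a simple positive cycle
on `q` whose `pmin` is maximal among all positive-weight simple cycles on `q`. -/
def GammaChoice (V : OneVASS Q) (γ : Q → List Q) : Prop :=
  ∀ q ∈ Qplus V,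
    IsSimpleCycleOn V (γ q) q ∧ 0 < pathWeight V (γ q) ∧
      ∀ π, IsSimpleCycleOn V π q → 0 < pathWeight V π → pmin V π ≤ pmin V (γ q)

/-- `Conf₊`: configurations `(q,z)` with `q ∈ Q₊` and `z + pmin (γ q) ≥ 0`. -/
def ConfPlus (V : OneVASS Q) (γ : Q → List Q) : Set (Q × ℕ) :=
  {c | c.1 ∈ Qplus V ∧ 0 ≤ (c.2 : ℤ) + pmin V (γ c.1)}

/-- `W_q`, the weight of the chosen cycle `γ q`, as a natural number. -/
def Wnat (V : OneVASS Q) (γ : Q → List Q) (q : Q) : ℕ :=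
  (pathWeight V (γ q)).toNat

/-- The `q`-residue class of `r` modulo `W_q`. -/
def resClass (V : OneVASS Q) (γ : Q → List Q) (q : Q) (r : ℕ) : Set (Q × ℕ) :=
  {c | c ∈ ConfPlus V γ ∧ c.1 = q ∧ c.2 % Wnat V γ q = r}

/-- `iterCycle π k` is the cycle `π` iterated `k+1` times. -/
def iterCycle (π : List Q) : ℕ → List Q
  | 0 => π
  | k + 1 => iterCycle π k ++ π.tail

/-- Counter values `z < z'` at state `q` are connected by a valid run iterating `γ q`. -/
def chainLinked (V : OneVASS Q) (γ : Q → List Q) (q : Q) (z z' : ℕ) : Prop :=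
  ∃ k, IsValidRun V (iterCycle (γ q) k) z ∧
    (z' : ℤ) = (z : ℤ) + pathWeight V (iterCycle (γ q) k)

/-- Any two configurations of `S` are connected by iterating `γ q`. -/
def ChainCond (V : OneVASS Q) (γ : Q → List Q) (q : Q) (S : Set (Q × ℕ)) : Prop :=
  ∀ c ∈ S, ∀ c' ∈ S, c.2 < c'.2 → chainLinked V γ q c.2 c'.2

/-- A `q`-chain inside the `q`-residue class of `r`: a maximal subset whose
configurations are pairwise connected by iterating `γ q`. -/
def IsChainIn (V : OneVASS Q) (γ : Q → List Q) (q : Q) (r : ℕ) (C : Set (Q × ℕ)) : Prop :=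
  C ⊆ resClass V γ q r ∧ ChainCond V γ q C ∧
    ∀ C', C ⊆ C' → C' ⊆ resClass V γ q r → ChainCond V γ q C' → C' = C

/-- A chain (in some residue class of some state of `Q₊`). -/
def IsChain (V : OneVASS Q) (γ : Q → List Q) (C : Set (Q × ℕ)) : Prop :=
  ∃ q r, q ∈ Qplus V ∧ r < Wnat V γ q ∧ IsChainIn V γ q r C

/-- A set of configurations is bounded if its counter values are bounded. -/
def chainBounded (C : Set (Q × ℕ)) : Prop :=
  BddAbove (Prod.snd '' C)

/-- A residue class is trivial if it consists of a single unbounded chain. -/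
def TrivialClass (V : OneVASS Q) (γ : Q → List Q) (q : Q) (r : ℕ) : Prop :=
  IsChainIn V γ q r (resClass V γ q r) ∧ ¬ chainBounded (resClass V γ q r)

/-- There is a valid run of length `k` (i.e. `k` transitions) from `c` into the set `S`. -/
def RunLenTo (V : OneVASS Q) (c : Q × ℕ) (S : Set (Q × ℕ)) (k : ℕ) : Prop :=
  ∃ π c', c' ∈ S ∧ IsValidRun V π c.2 ∧ RunFromTo V π c c' ∧ π.length = k + 1

/-- Configurations of `Conf₊ \ Un` whose distance to `Un` is minimal among all
configurations of `Conf₊ \ Un`. -/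
def Uprime (V : OneVASS Q) (γ : Q → List Q) (Un : Set (Q × ℕ)) : Set (Q × ℕ) :=
  {c | c ∈ ConfPlus V γ \ Un ∧
    ∃ k, RunLenTo V c Un k ∧
      ∀ c' ∈ ConfPlus V γ \ Un, ∀ j, RunLenTo V c' Un j → k ≤ j}

/-- `S` is downward closed in every chain. -/
def dcClosed (V : OneVASS Q) (γ : Q → List Q) (S : Set (Q × ℕ)) : Prop :=
  ∀ C, IsChain V γ C → ∀ c ∈ S ∩ C, ∀ c' ∈ C, c'.2 ≤ c.2 → c' ∈ S

/-- The inductive sequence `U_n`: `U_0` is the union of the unbounded chains; `U_{n+1}` is the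
smallest superset of `U_n ∪ U'_n` that is downward closed in every chain. -/
def U (V : OneVASS Q) (γ : Q → List Q) : ℕ → Set (Q × ℕ)
  | 0 => ⋃₀ {C | IsChain V γ C ∧ ¬ chainBounded C}
  | n + 1 => ⋂₀ {S | U V γ n ∪ Uprime V γ (U V γ n) ⊆ S ∧ dcClosed V γ S}

/-- `C` is an `n`-active bounded chain in the `q`-residue class of `r`. -/
def nActiveIn (V : OneVASS Q) (γ : Q → List Q) (q : Q) (r : ℕ) (n : ℕ)
    (C : Set (Q × ℕ)) : Prop :=
  IsChainIn V γ q r C ∧ chainBounded C ∧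
    ∃ c ∈ U V γ n ∩ resClass V γ q r, ∃ c' ∈ C, c.2 ≤ c'.2

/-- `δ_n(C)` for a `q`-chain `C`: configurations outside `U_n` whose counter value lies
between two counter values of `C \ U_n`. -/
def deltaC (V : OneVASS Q) (γ : Q → List Q) (n : ℕ) (q : Q) (C : Set (Q × ℕ)) :
    Set (Q × ℕ) :=
  {c | c ∈ ConfPlus V γ ∧ c.1 = q ∧ c ∉ U V γ n ∧
    ∃ z₁ z₂, (q, z₁) ∈ C \ U V γ n ∧ (q, z₂) ∈ C \ U V γ n ∧ z₁ ≤ c.2 ∧ c.2 ≤ z₂}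

/-- `δ_n(R)` for the `q`-residue class `R` of `r`: union of `δ_n(C)` over `n`-active chains. -/
def deltaR (V : OneVASS Q) (γ : Q → List Q) (n : ℕ) (q : Q) (r : ℕ) : Set (Q × ℕ) :=
  {c | ∃ C, nActiveIn V γ q r n C ∧ c ∈ deltaC V γ n q C}

/-- A positive-weight cycle (as a list of states). -/
def IsPosCycle (V : OneVASS Q) (π : List Q) : Prop :=
  2 ≤ π.length ∧ π.head? = π.getLast? ∧ 0 < pathWeight V π

/-- A path is primitive if no proper infix of it is a positive-weight cycle. -/
def Primitive (V : OneVASS Q) (π : List Q) : Prop :=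
  ∀ i l, (π.drop i).take l ≠ π → ¬ IsPosCycle V ((π.drop i).take l)

/-!
If a proper infix `σ` of the run is a positive cycle, repeatedly pick a state repeated inside
`σ`: when the inner cycle it closes is positive, recurse into it; otherwise cut it out, which
raises the weight and can only raise the minimal prefix weights of the remaining suffixes.
This ends at a position of `σ`, at some state `x`, carrying a positive simple cycle `δ` on `x`
with `pmin δ` at least the minimal prefix weight of `σ` from that position on. Since the run
stays nonnegative, the counter `c` there satisfies `0 ≤ c + pmin δ ≤ c + pmin (γ x)`, so the
configuration is in `Conf₊`. It is not the last configuration of the run; if it is the first,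
the end of `σ` is an internal configuration at the same state with a larger counter, hence
also in `Conf₊`.
-/

theorem _root_.List.le_foldr_min {α : Type*} [LinearOrder α] {l : List α} {b c : α}
    (hb : c ≤ b) (h : ∀ x ∈ l, c ≤ x) : c ≤ l.foldr min b := by
  induction l with
  | nil => exact hb
  | cons a l ih => simp_all

theorem _root_.List.exists_eq_append_cons_append_cons_of_not_nodup {α : Type*} {l : List α}
    (h : ¬ l.Nodup) : ∃ P y M T, l = P ++ y :: M ++ y :: T := by
  obtain ⟨y, hy⟩ : ∃ y, List.Sublist [y, y] l := by simpa [List.nodup_iff_sublist] using h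
  obtain ⟨r₁, r₂, rfl, h₁, h₂⟩ := List.cons_sublist_iff.1 hy
  obtain ⟨P, M₁, rfl⟩ := List.append_of_mem h₁
  obtain ⟨M₂, T, rfl⟩ := List.append_of_mem (List.singleton_sublist.1 h₂)
  exact ⟨P, y, M₁ ++ M₂, T, by simp⟩

section

variable (V : OneVASS Q)

@[simp]
lemma pathWeight_nil : pathWeight V [] = 0 := rfl

@[simp]
lemma pathWeight_singleton (a : Q) : pathWeight V [a] = 0 := rfl

lemma pathWeight_cons_cons (a b : Q) (l : List Q) :
    pathWeight V (a :: b :: l) = V.w a b + pathWeight V (b :: l) := by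
  simp [pathWeight]

lemma pathWeight_append_cons (A : List Q) (x : Q) (B : List Q) :
    pathWeight V (A ++ x :: B) = pathWeight V (A ++ [x]) + pathWeight V (x :: B) := by
  induction A with
  | nil => simp
  | cons a A ih =>
    cases A with
    | nil => simp [pathWeight_cons_cons]
    | cons b A => simp only [List.cons_append, pathWeight_cons_cons] at ih ⊢; rw [ih]; ring

lemma pathWeight_append_cycle (P M R : List Q) (y : Q) :
    pathWeight V (P ++ y :: M ++ y :: R)
      = pathWeight V (P ++ y :: R) + pathWeight V (y :: M ++ [y]) := by
  rw [pathWeight_append_cons, List.append_assoc, pathWeight_append_cons V P y R]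
  simp only [List.cons_append]
  rw [pathWeight_append_cons V P y (M ++ [y])]
  ring

lemma isPath_iff_isChain {l : List Q} : IsPath V l ↔ l ≠ [] ∧ l.IsChain V.delta := by
  induction l with
  | nil => simp [IsPath]
  | cons a l ih =>
    cases l with
    | nil => simp [IsPath]
    | cons b l => simp_all [IsPath]

lemma isPath_append_cons_iff {A B : List Q} {x : Q} :
    IsPath V (A ++ x :: B) ↔ IsPath V (A ++ [x]) ∧ IsPath V (x :: B) := by
  rw [isPath_iff_isChain, isPath_iff_isChain, isPath_iff_isChain, List.isChain_split]
  simp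

lemma pmin_le_of_prefix {p l : List Q} (h : p <+: l) : pmin V l ≤ pathWeight V p := by
  refine List.min_le_of_le' 0 (List.mem_map.2 ⟨p.length, ?_, ?_⟩) le_rfl
  · simpa [Nat.lt_succ_iff] using h.length_le
  · rw [← List.prefix_iff_eq_take.1 h]

lemma le_pmin {l : List Q} {c : ℤ} (h : ∀ p, p <+: l → c ≤ pathWeight V p) :
    c ≤ pmin V l := by
  refine List.le_foldr_min (h [] List.nil_prefix) ?_
  simp only [List.mem_map]
  rintro _ ⟨i, -, rfl⟩
  exact h _ (List.take_prefix i l)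

lemma pmin_le_pmin_of_prefix {l l' : List Q} (h : l <+: l') : pmin V l' ≤ pmin V l :=
  le_pmin V fun _ hp => pmin_le_of_prefix V (hp.trans h)

lemma counterAt_append_cons (z : ℕ) (A : List Q) (x : Q) (B : List Q) :
    counterAt V z (A ++ x :: B) A.length = z + pathWeight V (A ++ [x]) := by
  simp [counterAt, List.take_append, List.take_of_length_le]

def HasDominatingSimpleCycle (θ : List Q) : Prop :=
  ∃ L x S, θ = L ++ x :: S ∧ S ≠ [] ∧
    ∃ δ, IsSimpleCycleOn V δ x ∧ 0 < pathWeight V δ ∧ pmin V (x :: S) ≤ pmin V δ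

variable {V}

lemma pmin_insert_nonpos_cycle_le {A M R : List Q} {y : Q}
    (h : pathWeight V (y :: M ++ [y]) ≤ 0) :
    pmin V (A ++ y :: M ++ y :: R) ≤ pmin V (A ++ y :: R) := by
  refine le_pmin V fun p ⟨t, hpt⟩ => ?_
  rcases List.append_eq_append_iff.1 hpt with ⟨s, rfl, -⟩ | ⟨s, rfl, hs⟩
  · exact pmin_le_of_prefix V ((List.prefix_append p s).trans (by simp))
  rcases List.prefix_cons_iff.1 ⟨t, hs.symm⟩ with rfl | ⟨t', rfl, ht'⟩
  · exact pmin_le_of_prefix V (by simp)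
  calc pmin V (A ++ y :: M ++ y :: R) ≤ pathWeight V (A ++ y :: M ++ y :: t') :=
        pmin_le_of_prefix V (by simpa using ht')
    _ ≤ pathWeight V (A ++ y :: t') := by rw [pathWeight_append_cycle]; linarith

lemma mem_confPlus_of_nonneg_add_pmin {γ : Q → List Q} {x : Q} {c : ℤ} (hx : x ∈ Qplus V)
    (h : 0 ≤ c + pmin V (γ x)) : (x, c.toNat) ∈ ConfPlus V γ :=
  ⟨hx, by dsimp only; linarith [Int.self_le_toNat c]⟩

lemma HasDominatingSimpleCycle.infix {ι : List Q} (h : HasDominatingSimpleCycle V ι)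
    (P R : List Q) : HasDominatingSimpleCycle V (P ++ ι ++ R) := by
  obtain ⟨L, x, S, rfl, hS, δ, hδ, hδpos, hpmin⟩ := h
  exact ⟨P ++ L, x, S ++ R, by simp, by simp [hS], δ, hδ, hδpos,
    (pmin_le_pmin_of_prefix V (by simp)).trans hpmin⟩

lemma HasDominatingSimpleCycle.insert_cycle {P M R : List Q} {y : Q}
    (h : HasDominatingSimpleCycle V (P ++ y :: R)) (hι : pathWeight V (y :: M ++ [y]) ≤ 0) :
    HasDominatingSimpleCycle V (P ++ y :: M ++ y :: R) := by
  obtain ⟨L, x, S, heq, hS, δ, hδ, hδpos, hpmin⟩ := h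
  rcases List.append_eq_append_iff.1 heq.symm with
    ⟨_ | ⟨a, as⟩, hP, hxS⟩ | ⟨bs, rfl, hyR⟩
  · obtain ⟨rfl, rfl⟩ := List.cons_eq_cons.1 hxS
    refine ⟨P, x, M ++ x :: S, by simp, by simp, δ, hδ, hδpos, le_trans ?_ hpmin⟩
    simpa using pmin_insert_nonpos_cycle_le (A := []) (R := S) hι
  · obtain ⟨rfl, rfl⟩ := List.cons_eq_cons.1 hxS
    refine ⟨L, x, as ++ y :: M ++ y :: R, by simp [hP], by simp, δ, hδ, hδpos,
      le_trans ?_ hpmin⟩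
    simpa using pmin_insert_nonpos_cycle_le (A := x :: as) (R := R) hι
  · exact ⟨P ++ y :: M ++ bs, x, S, by simp [hyR], hS, δ, hδ, hδpos, hpmin⟩

lemma IsPath.infix {l l' : List Q} (h : IsPath V l) (h' : l' <:+: l)
    (hne : l' ≠ []) : IsPath V l' :=
  (isPath_iff_isChain V).2 ⟨hne, ((isPath_iff_isChain V).1 h).2.infix h'⟩

lemma IsPath.remove_cycle {P M R : List Q} {y : Q}
    (h : IsPath V (P ++ y :: M ++ y :: R)) : IsPath V (P ++ y :: R) := by
  have h₁ := (isPath_append_cons_iff V).1 h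
  have h₂ := (isPath_append_cons_iff V (A := P) (x := y) (B := M ++ [y])).1
    (by simpa using h₁.1)
  exact (isPath_append_cons_iff V).2 ⟨h₂.1, h₁.2⟩

lemma IsPosCycle.hasDominatingSimpleCycle {θ : List Q} (hpath : IsPath V θ)
    (hθ : IsPosCycle V θ) : HasDominatingSimpleCycle V θ := by
  induction h : θ.length using Nat.strong_induction_on generalizing θ with
  | _ n ih =>
  obtain ⟨hlen, hclosed, hpos⟩ := hθ
  by_cases hnd : θ.dropLast.Nodup
  · obtain _ | ⟨x, _ | ⟨x', S⟩⟩ := θ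
    · simp at hlen
    · simp at hlen
    refine ⟨[], x, x' :: S, rfl, List.cons_ne_nil _ _, _, ⟨⟨hpath, hlen, rfl, ?_⟩, hnd⟩,
      hpos, le_rfl⟩
    simpa using hclosed.symm
  obtain ⟨P, y, M, T, hdl⟩ := List.exists_eq_append_cons_append_cons_of_not_nodup hnd
  obtain ⟨R, hR, rfl⟩ : ∃ R, R ≠ [] ∧ θ = P ++ y :: M ++ y :: R := by
    have hne : θ ≠ [] := List.ne_nil_of_length_pos (by omega)
    refine ⟨T ++ [θ.getLast hne], by simp, ?_⟩
    conv_lhs => rw [← List.dropLast_append_getLast hne, hdl]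
    simp
  have hRpos := List.length_pos_iff.2 hR
  simp only [List.length_append, List.length_cons] at h
  by_cases hι : 0 < pathWeight V (y :: M ++ [y])
  · have hιpath : IsPath V (y :: M ++ [y]) := hpath.infix ⟨P, R, by simp⟩ (by simp)
    have hιcyc : IsPosCycle V (y :: M ++ [y]) :=
      ⟨by simp, by rw [List.getLast?_append]; simp, hι⟩
    have hιlen : (y :: M ++ [y]).length < n := by
      simp only [List.length_append, List.length_cons, List.length_nil]; omega
    simpa using (ih _ hιlen hιpath hιcyc rfl).infix P R
  · have hcyc' : IsPosCycle V (P ++ y :: R) := by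
      refine ⟨by simp only [List.length_append, List.length_cons]; omega, ?_, ?_⟩
      · rw [List.getLast?_append_of_ne_nil _ (by simp), List.getLast?_cons,
          List.getLast?_eq_some_getLast hR] at hclosed ⊢
        simpa using hclosed
      · rw [pathWeight_append_cycle] at hpos
        linarith
    have hlen' : (P ++ y :: R).length < n := by
      simp only [List.length_append, List.length_cons]; omega
    exact (ih _ hlen' hpath.remove_cycle hcyc' rfl).insert_cycle (not_lt.1 hι)

lemma IsRun.nonneg_of_prefix {π p : List Q} {z : ℕ} (h : IsRun V π z)
    (hp : p <+: π) (hne : p ≠ []) : 0 ≤ z + pathWeight V p := by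
  have hlen : 0 < p.length := List.length_pos_iff.2 hne
  have := h.2 (p.length - 1) (by have := hp.length_le; omega)
  rwa [counterAt, Nat.sub_add_cancel hlen, ← List.prefix_iff_eq_take.1 hp] at this

lemma IsRun.nonneg_add_pmin {A B : List Q} {x : Q} {z : ℕ}
    (h : IsRun V (A ++ x :: B) z) : 0 ≤ z + pathWeight V (A ++ [x]) + pmin V (x :: B) := by
  suffices -(z + pathWeight V (A ++ [x])) ≤ pmin V (x :: B) by linarith
  refine le_pmin V fun p hp => ?_
  rcases List.prefix_cons_iff.1 hp with rfl | ⟨q, rfl, hq⟩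
  · have := h.nonneg_of_prefix (p := A ++ [x]) (by simp) (by simp)
    simp only [pathWeight_nil]
    linarith
  · have := h.nonneg_of_prefix (p := A ++ x :: q) (by simpa using hq) (by simp)
    rw [pathWeight_append_cons] at this
    linarith

lemma IsRun.exists_confPlus_at_posCycle {γ : Q → List Q} (hγ : GammaChoice V γ)
    {P σ R : List Q} {z : ℕ} (hrun : IsRun V (P ++ σ ++ R) z) (hσ : IsPosCycle V σ) :
    ∃ L x S, σ = L ++ x :: S ∧ S ≠ [] ∧ x ∈ Qplus V ∧
      0 ≤ z + pathWeight V (P ++ L ++ [x]) + pmin V (γ x) := by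
  have hσpath : IsPath V σ :=
    hrun.1.infix ⟨P, R, rfl⟩ (List.ne_nil_of_length_pos (by have := hσ.1; omega))
  obtain ⟨L, x, S, rfl, hS, δ, hδ, hδpos, hpmin⟩ := hσ.hasDominatingSimpleCycle hσpath
  have hx : x ∈ Qplus V := ⟨δ, hδ, hδpos⟩
  refine ⟨L, x, S, rfl, hS, hx, ?_⟩
  have h₁ := (by simpa using hrun : IsRun V ((P ++ L) ++ x :: (S ++ R)) z).nonneg_add_pmin
  have h₂ := pmin_le_pmin_of_prefix V (by simp : x :: S <+: x :: (S ++ R))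
  have h₃ := (hγ x hx).2.2 δ hδ hδpos
  linarith

lemma IsRun.exists_internal_confPlus {γ : Q → List Q} (hγ : GammaChoice V γ)
    {P σ R : List Q} {z : ℕ} (hrun : IsRun V (P ++ σ ++ R) z) (hσ : IsPosCycle V σ)
    (hPR : P ≠ [] ∨ R ≠ []) :
    ∃ A x B, P ++ σ ++ R = A ++ x :: B ∧ A ≠ [] ∧ B ≠ [] ∧
      (x, (z + pathWeight V (A ++ [x])).toNat) ∈ ConfPlus V γ := by
  obtain ⟨L, x, S, rfl, hS, hx, hconf⟩ := hrun.exists_confPlus_at_posCycle hγ hσ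
  by_cases hPL : P ++ L = []
  · obtain ⟨rfl, rfl⟩ := List.append_eq_nil_iff.1 hPL
    obtain ⟨S', y, rfl⟩ := (List.eq_nil_or_concat S).resolve_left hS
    obtain rfl : x = y := by
      simpa [List.getLast?_cons, List.getLast?_append] using hσ.2.1
    -- the cycle returns to `x` with a larger counter, and `Conf₊` is upward closed
    refine ⟨x :: S', x, R, by simp, by simp, by simpa using hPR,
      mem_confPlus_of_nonneg_add_pmin hx ?_⟩
    have := hσ.2.2
    simp only [List.nil_append, List.append_nil, List.concat_eq_append, List.cons_append,
      pathWeight_singleton] at hconf this ⊢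
    linarith
  · exact ⟨P ++ L, x, S ++ R, by simp, hPL, by simp [hS],
      mem_confPlus_of_nonneg_add_pmin hx (by simpa using hconf)⟩

end

theorem primitive_of_no_internal_confPlus_general
    {Q : Type} (V : OneVASS Q) (γ : Q → List Q) (hγ : GammaChoice V γ)
    (π : List Q) (z : ℕ) (hrun : IsValidRun V π z)
    (hint : ∀ i, ∀ h : i < π.length, 0 < i → i + 1 < π.length →
      (π.get ⟨i, h⟩, (counterAt V z π i).toNat) ∉ ConfPlus V γ) :
    Primitive V π := by
  intro i l hne hcyc
  obtain ⟨P, R, hπ⟩ : ∃ P R, π = P ++ (π.drop i).take l ++ R :=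
    ⟨π.take i, (π.drop i).drop l, by simp⟩
  generalize (π.drop i).take l = σ at hne hcyc hπ
  subst hπ
  have hPR : P ≠ [] ∨ R ≠ [] := by
    by_contra! h
    obtain ⟨rfl, rfl⟩ := h
    simp at hne
  obtain ⟨A, x, B, hsplit, hA, hB, hconf⟩ := hrun.1.exists_internal_confPlus hγ hcyc hPR
  rw [hsplit] at hint
  refine hint A.length (by simp) (List.length_pos_iff.2 hA)
    (by simp [List.length_pos_iff.2 hB]) ?_
  simpa [counterAt_append_cons] using hconf

/-- a valid run none of whose internal configurations lies in `Conf₊`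
has a primitive underlying path. -/
theorem primitive_of_no_internal_confPlus
    {Q : Type} [Fintype Q] (V : OneVASS Q) (γ : Q → List Q) (hγ : GammaChoice V γ)
    (π : List Q) (z : ℕ) (hrun : IsValidRun V π z)
    (hint : ∀ i, ∀ h : i < π.length, 0 < i → i + 1 < π.length →
      (π.get ⟨i, h⟩, (counterAt V z π i).toNat) ∉ ConfPlus V γ) :
    Primitive V π :=
  primitive_of_no_internal_confPlus_general V γ hγ π z hrun hint

end VASSPaper
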